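/- Let (R, m) be a one-dimensional Cohen-Macaulay Noetherian local ring with infinite residue field possessing a canonical ideal ω_R with R ⊆ ω_R ⊆ R̄, let I be an m-primary ideal of R, let zR (z an invertible element of the total ring of fractions Q(R)) be a minimal reduction of (ω_R : I), and let a, b ∈ R. Then the set K = { x/z + (y/z)t : x ∈ (ω_R : I), y ∈ ω_R }, with R(I)_{a,b}-module structure given by (r+it)(x/z + (y/z)t) = (rx/z − biy/z) + (ry/z + ix/z − aiy/z)t, is a canonical ideal of R(I)_{a,b} (i.e., a fractional ideal isomorphic as an R(I)_{a,b}-module to Hom_R(R(I)_{a,b}, ω_R)) satisfying R(I)_{a,b} ⊆ K ⊆ overline{R(I)_{a,b}}, the integral closure of R(I)_{a,b} in its total ring of fractions. -/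

import Mathlib

open IsLocalRing

universe u

/-! ### The family of rings `R(I)_{a,b}`

`RIab R I a b` is the quotient of the Rees algebra `⊕ₙ Iⁿtⁿ` by the contraction of the
ideal generated by `t² + a t + b`.  As an `R`-module it is `R ⊕ I`; we realize it as the
type of pairs `r + i t` with `r ∈ R`, `i ∈ I`, with multiplication
`(r + i t)(s + j t) = (r s - b i j) + (r j + s i - a i j) t`. -/
@[ext]
structure RIab (R : Type u) [CommRing R] (I : Ideal R) (a b : R) : Type u where
  r : R
  i : R
  hi : i ∈ I

namespace RIab

variable {R : Type u} [CommRing R] {I : Ideal R} {a b : R}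

instance : Zero (RIab R I a b) := ⟨⟨0, 0, I.zero_mem⟩⟩
instance : One (RIab R I a b) := ⟨⟨1, 0, I.zero_mem⟩⟩
instance : Add (RIab R I a b) := ⟨fun x y => ⟨x.r + y.r, x.i + y.i, I.add_mem x.hi y.hi⟩⟩
instance : Neg (RIab R I a b) := ⟨fun x => ⟨-x.r, -x.i, I.neg_mem x.hi⟩⟩
instance : Mul (RIab R I a b) :=
  ⟨fun x y => ⟨x.r * y.r - b * (x.i * y.i),
    x.r * y.i + y.r * x.i - a * (x.i * y.i),
    I.sub_mem (I.add_mem (I.mul_mem_left _ y.hi) (I.mul_mem_left _ x.hi))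
      (I.mul_mem_left _ (I.mul_mem_left _ y.hi))⟩⟩

@[simp] lemma zero_r : (0 : RIab R I a b).r = 0 := rfl
@[simp] lemma zero_i : (0 : RIab R I a b).i = 0 := rfl
@[simp] lemma one_r : (1 : RIab R I a b).r = 1 := rfl
@[simp] lemma one_i : (1 : RIab R I a b).i = 0 := rfl
@[simp] lemma add_r (x y : RIab R I a b) : (x + y).r = x.r + y.r := rfl
@[simp] lemma add_i (x y : RIab R I a b) : (x + y).i = x.i + y.i := rfl
@[simp] lemma neg_r (x : RIab R I a b) : (-x).r = -x.r := rfl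
@[simp] lemma neg_i (x : RIab R I a b) : (-x).i = -x.i := rfl
@[simp] lemma mul_r (x y : RIab R I a b) : (x * y).r = x.r * y.r - b * (x.i * y.i) := rfl
@[simp] lemma mul_i (x y : RIab R I a b) :
    (x * y).i = x.r * y.i + y.r * x.i - a * (x.i * y.i) := rfl

instance instCommRing : CommRing (RIab R I a b) where
  add_assoc x y z := by ext <;> simp <;> ring
  zero_add x := by ext <;> simp
  add_zero x := by ext <;> simp
  add_comm x y := by ext <;> simp <;> ring
  neg_add_cancel x := by ext <;> simp
  mul_assoc x y z := by ext <;> simp <;> ring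
  one_mul x := by ext <;> simp
  mul_one x := by ext <;> simp
  left_distrib x y z := by ext <;> simp <;> ring
  right_distrib x y z := by ext <;> simp <;> ring
  zero_mul x := by ext <;> simp
  mul_zero x := by ext <;> simp
  mul_comm x y := by ext <;> simp <;> ring
  nsmul := nsmulRec
  zsmul := zsmulRec

/-- The canonical ring homomorphism `R → R(I)_{a,b}`, `r ↦ r + 0·t`. -/
def C : R →+* RIab R I a b where
  toFun r := ⟨r, 0, I.zero_mem⟩
  map_one' := rfl
  map_mul' x y := by ext <;> simp
  map_zero' := rfl
  map_add' x y := by ext <;> simp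

instance instAlgebra : Algebra R (RIab R I a b) := (C (I := I) (a := a) (b := b)).toAlgebra

@[simp] lemma algebraMap_r (c : R) : (algebraMap R (RIab R I a b) c).r = c := rfl
@[simp] lemma algebraMap_i (c : R) : (algebraMap R (RIab R I a b) c).i = 0 := rfl

instance [Nontrivial R] : Nontrivial (RIab R I a b) :=
  ⟨⟨0, 1, fun h => zero_ne_one (congrArg RIab.r h)⟩⟩

variable [IsLocalRing R]

lemma isUnit_of_isUnit_r (hI : I ≠ ⊤) {x : RIab R I a b} (hx : IsUnit x.r) : IsUnit x := by
  have hiI : x.i ∈ maximalIdeal R := le_maximalIdeal hI x.hi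
  have hdet : IsUnit (x.r * x.r - a * x.r * x.i + b * (x.i * x.i)) := by
    by_contra h
    have hmem : x.r * x.r - a * x.r * x.i + b * (x.i * x.i) ∈ maximalIdeal R := by
      rwa [IsLocalRing.mem_maximalIdeal, mem_nonunits_iff]
    have : x.r * x.r ∈ maximalIdeal R := by
      have := (maximalIdeal R).add_mem hmem
        ((maximalIdeal R).sub_mem
          ((maximalIdeal R).mul_mem_left (a * x.r) hiI)
          ((maximalIdeal R).mul_mem_left (b * x.i) hiI))
      have h2 : x.r * x.r - a * x.r * x.i + b * (x.i * x.i) +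
          (a * x.r * x.i - b * x.i * x.i) = x.r * x.r := by ring
      rwa [h2] at this
    exact (IsLocalRing.mem_maximalIdeal _).mp this (hx.mul hx)
  obtain ⟨v, hv⟩ := hdet.exists_left_inv
  refine IsUnit.of_mul_eq_one ⟨v * (x.r - a * x.i), v * (-x.i),
    I.mul_mem_left _ (I.neg_mem x.hi)⟩ ?_
  ext
  · show x.r * (v * (x.r - a * x.i)) - b * (x.i * (v * (-x.i))) = 1
    linear_combination hv
  · show x.r * (v * (-x.i)) + v * (x.r - a * x.i) * x.i - a * (x.i * (v * (-x.i))) = 0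
    ring

instance instIsLocalRing [Fact (I ≠ ⊤)] : IsLocalRing (RIab R I a b) := by
  refine IsLocalRing.of_isUnit_or_isUnit_one_sub_self fun x => ?_
  by_cases hx : IsUnit x.r
  · exact Or.inl (isUnit_of_isUnit_r Fact.out hx)
  · refine Or.inr (isUnit_of_isUnit_r Fact.out ?_)
    have hxm : x.r ∈ maximalIdeal R := by rwa [IsLocalRing.mem_maximalIdeal, mem_nonunits_iff]
    show IsUnit (1 - x).r
    have : (1 - x).r = 1 - x.r := by
      show (1 + -x).r = 1 - x.r
      simp; ring
    rw [this]
    by_contra h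
    have : (1 : R) ∈ maximalIdeal R := by
      have h1 : 1 - x.r ∈ maximalIdeal R := by
        rwa [IsLocalRing.mem_maximalIdeal, mem_nonunits_iff]
      have := (maximalIdeal R).add_mem h1 hxm
      simpa using this
    exact (maximalIdeal.isMaximal R).ne_top ((Ideal.eq_top_iff_one _).mpr this)

lemma mem_maximalIdeal_iff [Fact (I ≠ ⊤)] (x : RIab R I a b) :
    x ∈ maximalIdeal (RIab R I a b) ↔ x.r ∈ maximalIdeal R := by
  constructor
  · intro hx
    rw [IsLocalRing.mem_maximalIdeal, mem_nonunits_iff] at hx ⊢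
    intro hr
    exact hx (isUnit_of_isUnit_r Fact.out hr)
  · intro hx
    rw [IsLocalRing.mem_maximalIdeal, mem_nonunits_iff] at hx ⊢
    intro hu
    obtain ⟨y, hy⟩ := hu.exists_right_inv
    refine hx ?_
    have h1 : x.r * y.r - b * (x.i * y.i) = 1 := congrArg RIab.r hy
    have hIm : x.i * y.i ∈ maximalIdeal R :=
      le_maximalIdeal Fact.out (I.mul_mem_right _ x.hi)
    by_contra h
    have hxm : x.r ∈ maximalIdeal R := by rwa [IsLocalRing.mem_maximalIdeal, mem_nonunits_iff]
    have : (1 : R) ∈ maximalIdeal R := by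
      rw [← h1]
      exact (maximalIdeal R).sub_mem ((maximalIdeal R).mul_mem_right _ hxm)
        ((maximalIdeal R).mul_mem_left _ hIm)
    exact (maximalIdeal.isMaximal R).ne_top ((Ideal.eq_top_iff_one _).mpr this)

lemma algebraMap_mem_nonZeroDivisors {u : R} (hu : u ∈ nonZeroDivisors R) :
    algebraMap R (RIab R I a b) u ∈ nonZeroDivisors (RIab R I a b) := by
  rw [mem_nonZeroDivisors_iff_right]
  intro x hx
  have h1 : x.r * u - b * (x.i * 0) = 0 := congrArg RIab.r hx
  have h2 : x.r * 0 + u * x.i - a * (x.i * 0) = 0 := congrArg RIab.i hx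
  simp only [mul_zero, sub_zero, zero_add] at h1 h2
  rw [mul_comm] at h2
  ext
  · exact (mem_nonZeroDivisors_iff_right.mp hu) _ h1
  · exact (mem_nonZeroDivisors_iff_right.mp hu) _ h2

/-- The induced homomorphism between total quotient rings `Q(R) → Q(R(I)_{a,b})`. -/
noncomputable def mapFrac (I : Ideal R) (a b : R) :
    FractionRing R →+* FractionRing (RIab R I a b) :=
  IsLocalization.map (T := nonZeroDivisors (RIab R I a b)) _
    (algebraMap R (RIab R I a b)) (fun _ hu => algebraMap_mem_nonZeroDivisors hu)

/-- The element `t ∈ Q(R(I)_{a,b})`, realized as `(0 + i₀ t)/i₀` for a regular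
element `i₀ ∈ I`. -/
noncomputable def tau (I : Ideal R) (a b : R) (i₀ : R) (h : i₀ ∈ I)
    (hreg : i₀ ∈ nonZeroDivisors R) : FractionRing (RIab R I a b) :=
  IsLocalization.mk' _ (⟨0, i₀, h⟩ : RIab R I a b)
    (⟨algebraMap R (RIab R I a b) i₀, algebraMap_mem_nonZeroDivisors hreg⟩ :
      nonZeroDivisors (RIab R I a b))

end RIab

/-! ### Commutative-algebra notions used in the paper -/

instance (priority := 10) factMaximalIdealNeTop (R : Type u) [CommRing R] [IsLocalRing R] :
    Fact (maximalIdeal R ≠ ⊤) := ⟨(maximalIdeal.isMaximal R).ne_top⟩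

instance quotientIsLocalRing (R : Type u) [CommRing R] [IsLocalRing R] (I : Ideal R)
    [hI : Fact (I ≠ ⊤)] : IsLocalRing (R ⧸ I) :=
  have : Nontrivial (R ⧸ I) := Ideal.Quotient.nontrivial_iff.mpr hI.out
  IsLocalRing.of_surjective' (Ideal.Quotient.mk I) Ideal.Quotient.mk_surjective

section CA

variable (R : Type u) [CommRing R]

/-- The length `λ_R(M)` of an `R`-module, as the Krull dimension of its submodule lattice. -/
noncomputable def modLength (M : Type*) [AddCommGroup M] [Module R M] : ℕ∞ :=
  (Order.krullDim (Submodule R M)).unbotD 0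

/-- `λ_R(A / B)` (more precisely `λ_R(A/(A ∩ B))`) for submodules `A B` of a module. -/
noncomputable def subquotLength {M : Type*} [AddCommGroup M] [Module R M]
    (A B : Submodule R M) : ℕ∞ :=
  modLength R (↥A ⧸ (Submodule.comap A.subtype B))

/-- The depth of a module over a local ring: the supremum of the lengths of (weakly)
regular sequences contained in the maximal ideal. -/
noncomputable def moduleDepth [IsLocalRing R] (M : Type*) [AddCommGroup M] [Module R M] : ℕ∞ :=
  sSup {n : ℕ∞ | ∃ rs : List R, (∀ x ∈ rs, x ∈ maximalIdeal R) ∧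
    RingTheory.Sequence.IsWeaklyRegular M rs ∧ (rs.length : ℕ∞) = n}

/-- A local ring is Cohen-Macaulay if its depth equals its Krull dimension. -/
def IsCohenMacaulayLocalRing [IsLocalRing R] : Prop :=
  (moduleDepth R R : WithBot ℕ∞) = ringKrullDim R

/-- A maximal Cohen-Macaulay module: finitely generated with depth equal to `dim R`. -/
def IsMaximalCohenMacaulay [IsLocalRing R] (M : Type*) [AddCommGroup M] [Module R M] : Prop :=
  Module.Finite R M ∧ (moduleDepth R M : WithBot ℕ∞) = ringKrullDim R

/-- A Cohen-Macaulay module: finitely generated with depth equal to its dimension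
`dim (R / ann M)`. -/
def IsCohenMacaulayModule [IsLocalRing R] (M : Type*) [AddCommGroup M] [Module R M] : Prop :=
  Module.Finite R M ∧
    (moduleDepth R M : WithBot ℕ∞) = ringKrullDim (R ⧸ Module.annihilator R M)

/-- The Krull dimension of a ring as a natural number. -/
noncomputable def krullDimNat : ℕ := ENat.toNat ((ringKrullDim R).unbotD 0)

open CategoryTheory in
/-- `Ext^n_R(k, M)` where `k` is the residue field of the local ring `R`. -/
noncomputable def extResidue [IsLocalRing R] (M : Type u) [AddCommGroup M] [Module R M]
    (n : ℕ) : ModuleCat R :=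
  ((Ext R (ModuleCat.{u} R) n).obj
    (Opposite.op (ModuleCat.of R (ResidueField R)))).obj (ModuleCat.of R M)

/-- The Cohen-Macaulay type `t(R) = dim_k Ext^d_R(k, R)` of a local ring of dimension `d`. -/
noncomputable def CMtype [IsLocalRing R] : ℕ∞ :=
  modLength R (extResidue R R (krullDimNat R))

/-- A canonical module of a local ring: a finitely generated module `W` with
`dim_k Ext^i_R(k, W) = δ_{i, dim R}`. -/
def IsCanonicalModule [IsLocalRing R] (W : Type u) [AddCommGroup W] [Module R W] : Prop :=
  Module.Finite R W ∧ ∀ n : ℕ,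
    modLength R (extResidue R W n) = if n = krullDimNat R then 1 else 0

/-- A Gorenstein local ring: Cohen-Macaulay of type one. -/
def IsGorensteinLocalRing [IsLocalRing R] : Prop :=
  IsCohenMacaulayLocalRing R ∧ CMtype R = 1

/-- A regular local ring: Noetherian and the maximal ideal is generated by `dim R`
elements. -/
def IsRegularLocalRing' [IsLocalRing R] : Prop :=
  IsNoetherianRing R ∧ ∃ s : Finset R,
    Ideal.span (s : Set R) = maximalIdeal R ∧ (s.card : WithBot ℕ∞) = ringKrullDim R

/-- A complete intersection: the completion is a regular local ring modulo an ideal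
generated by a regular sequence. -/
def IsCompleteIntersectionLocalRing [IsLocalRing R] : Prop :=
  ∃ (T : Type u) (_ : CommRing T) (_ : IsLocalRing T),
    IsRegularLocalRing' T ∧ ∃ rs : List T, RingTheory.Sequence.IsRegular T rs ∧
      Nonempty ((AdicCompletion (maximalIdeal R) R) ≃+* (T ⧸ Ideal.ofList rs))

/-- The colon `(A : B) = {q ∈ Q | qB ⊆ A}` of two `R`-submodules of an `R`-algebra `Q`. -/
def qcolon {Q : Type*} [CommRing Q] [Algebra R Q] (A B : Submodule R Q) : Submodule R Q where
  carrier := {q | ∀ x ∈ B, q * x ∈ A}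
  add_mem' := fun {p q} hp hq x hx => by
    rw [add_mul]; exact A.add_mem (hp x hx) (hq x hx)
  zero_mem' := fun x hx => by rw [zero_mul]; exact A.zero_mem
  smul_mem' := fun c q hq x hx => by
    rw [Algebra.smul_mul_assoc]; exact A.smul_mem c (hq x hx)

/-- The image of an ideal in the total ring of fractions, as an `R`-submodule. -/
noncomputable def idealToFrac (J : Ideal R) : Submodule R (FractionRing R) :=
  Submodule.map (Algebra.linearMap R (FractionRing R)) J

/-- `z R` is a (minimal, i.e. principal) reduction of the fractional ideal `H`:
`z ∈ H` and `H^{n+1} = z H^n` for some `n`. -/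
def IsPrincipalReduction {Q : Type*} [CommRing Q] [Algebra R Q] (z : Q)
    (H : Submodule R Q) : Prop :=
  z ∈ H ∧ ∃ n : ℕ, H ^ (n + 1) = Submodule.span R {z} * H ^ n

/-- A one-dimensional local Cohen-Macaulay ring is almost Gorenstein if it has a canonical
module which is a fractional ideal `ω` with `R ⊆ ω ⊆ (m : m)`. -/
def IsAlmostGorensteinOneDim (S : Type u) [CommRing S] [IsLocalRing S] : Prop :=
  ∃ W : Submodule S (FractionRing S), IsFractional (nonZeroDivisors S) W ∧
    IsCanonicalModule S ↥W ∧ (1 : FractionRing S) ∈ W ∧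
    W * (Submodule.map (Algebra.linearMap S (FractionRing S)) (maximalIdeal S)) ≤
      Submodule.map (Algebra.linearMap S (FractionRing S)) (maximalIdeal S)

open Filter in
/-- The Hilbert-Samuel multiplicity `e⁰_m(C)` of a module `C` over a local ring,
defined as `lim_t d! · λ(C/m^t C) / t^d` where `d = dim C`. -/
noncomputable def hsMultiplicity (S : Type u) [CommRing S] [IsLocalRing S]
    (C : Type*) [AddCommGroup C] [Module S C] : ℝ :=
  limUnder atTop (fun t : ℕ =>
    ((Nat.factorial (krullDimNat (S ⧸ Module.annihilator S C)) *
        (modLength S (C ⧸ ((maximalIdeal S ^ t) • (⊤ : Submodule S C)))).toNat : ℕ) : ℝ) /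
      (t : ℝ) ^ (krullDimNat (S ⧸ Module.annihilator S C)))

/-- The minimal number of generators `μ(C) = λ(C / m C)` of a module over a local ring. -/
noncomputable def muGen (S : Type u) [CommRing S] [IsLocalRing S]
    (C : Type*) [AddCommGroup C] [Module S C] : ℕ∞ :=
  modLength S (C ⧸ ((maximalIdeal S) • (⊤ : Submodule S C)))

/-- A Cohen-Macaulay local ring possessing a canonical module is almost Gorenstein if there
is an exact sequence `0 → S → ω_S → C → 0` with `μ(C) = e⁰_m(C)` (Goto-Takahashi-Taniguchi). -/
def IsAlmostGorensteinLocalRing (S : Type u) [CommRing S] [IsLocalRing S] : Prop :=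
  ∃ W : ModuleCat.{u} S, IsCanonicalModule S W ∧
    ∃ f : S →ₗ[S] W, Function.Injective f ∧
      ∃ m : ℕ, muGen S (W ⧸ LinearMap.range f) = m ∧
        (m : ℝ) = hsMultiplicity S (W ⧸ LinearMap.range f)

/-- The height of an ideal: the infimum of the heights of the primes containing it. -/
noncomputable def idealHeight (J : Ideal R) : ℕ∞ :=
  ⨅ (p : PrimeSpectrum R) (_ : J ≤ p.asIdeal), Order.height p

end CA

/-! As an `R`-module `R(I)_{a,b} = R ⊕ I t`. Since `I` contains a regular element, an `R`-linear
map `φ : R(I)_{a,b} → ω` is multiplication by some `q ∈ (ω : I)` on `I t`; with `y = φ 1` and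
`x = q + a y` it is `s ↦ (t`-coordinate of `s (x + y t))`. The coordinates of `x + y t` in
`Q(R(I)_{a,b})` being unique, this identifies `Hom_R(R(I)_{a,b}, ω)` with
`K = z⁻¹ ((ω : I) + ω t)` as `R(I)_{a,b}`-modules, and `R(I)_{a,b} ⊆ K` because `z ∈ (ω : I)`.
For `u ∈ (ω : I)`, `u / z` stabilises the finitely generated `(ω : I)ⁿ ∋ zⁿ` (`z R` is a
reduction), so it is integral over `R`; so is `t`, a root of `X² + a X + b`. -/

open scoped nonZeroDivisors

section Reduction

variable {R : Type*} [CommRing R] [IsNoetherianRing R]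

theorem IsFractional.fg {S : Submonoid R} {P : Type*} [CommRing P] [Algebra R P]
    [IsLocalization S P] {H : Submodule R P} (hH : IsFractional S H) : H.FG := by
  obtain ⟨c, hc, hcH⟩ := hH
  let g : P →ₗ[R] P := LinearMap.mulLeft R (algebraMap R P c)
  have hg : Function.Injective g := (IsLocalization.map_units P ⟨c, hc⟩).mul_right_injective
  refine Submodule.fg_of_fg_map_injective g hg
    (isNoetherian_submodule.mp inferInstance _ (?_ : _ ≤ LinearMap.range (Algebra.linearMap R P)))
  rintro _ ⟨x, hx, rfl⟩
  obtain ⟨r, hr⟩ := hcH x hx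
  exact ⟨r, hr.trans (Algebra.smul_def c x)⟩

theorem IsPrincipalReduction.isIntegral_mul_inv {Q : Type*} [CommRing Q] [Algebra R Q]
    {H : Submodule R Q} (hH : H.FG) {z : Qˣ} (hz : IsPrincipalReduction R (z : Q) H)
    {u : Q} (hu : u ∈ H) : IsIntegral R (u * ↑z⁻¹) := by
  obtain ⟨hzH, n, hn⟩ := hz
  set x := u * ↑z⁻¹
  have hstable : ∀ w ∈ H ^ n, x * w ∈ H ^ n := by
    intro w hw
    have huw : u * w ∈ H ^ (n + 1) := pow_succ' H n ▸ Submodule.mul_mem_mul hu hw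
    obtain ⟨w', hw', hzw'⟩ := Submodule.mem_span_singleton_mul.mp (hn ▸ huw)
    rwa [show x * w = w' by rw [mul_right_comm, ← hzw', mul_comm, Units.inv_mul_cancel_left]]
  have hpow : ∀ m : ℕ, x ^ m * ↑z ^ n ∈ H ^ n := by
    intro m
    induction m with
    | zero => simpa using Submodule.pow_mem_pow H hzH n
    | succ m ih => simpa [pow_succ', mul_assoc] using hstable _ ih
  -- the powers of `x` lie in the finitely generated module `z⁻ⁿ Hⁿ`
  let N := (H ^ n).map (LinearMap.mulLeft R ((↑z⁻¹ : Q) ^ n))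
  have hadjoin : Subalgebra.toSubmodule (Algebra.adjoin R {x}) ≤ N := by
    rw [Algebra.adjoin_eq_span, ← Submonoid.powers_eq_closure, Submodule.span_le]
    rintro _ ⟨m, rfl⟩
    refine ⟨_, hpow m, ?_⟩
    rw [LinearMap.mulLeft_apply, mul_left_comm, ← mul_pow, Units.inv_mul, one_pow, mul_one]
  have : IsNoetherian R N := isNoetherian_of_fg_of_noetherian N ((hH.pow n).map _)
  exact .of_mem_of_fg _ (isNoetherian_submodule.mp this _ hadjoin) x
    (Algebra.self_mem_adjoin_singleton R x)

end Reduction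

section Colon

variable {R : Type*} [CommRing R] {W : Submodule R (FractionRing R)} {I : Ideal R}

theorem mem_qcolon_idealToFrac {q : FractionRing R} :
    q ∈ qcolon R W (idealToFrac R I) ↔ ∀ j ∈ I, q * algebraMap R _ j ∈ W :=
  ⟨fun h j hj => h _ ⟨j, hj, rfl⟩, by rintro h _ ⟨j, hj, rfl⟩; exact h j hj⟩

theorem le_qcolon_idealToFrac : W ≤ qcolon R W (idealToFrac R I) := fun y hy =>
  mem_qcolon_idealToFrac.mpr fun j _ => by
    rw [mul_comm, ← Algebra.smul_def]
    exact W.smul_mem j hy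

theorem IsFractional.qcolon_idealToFrac (hW : IsFractional R⁰ W) {i₀ : R} (hi₀ : i₀ ∈ I)
    (hreg : i₀ ∈ R⁰) : IsFractional R⁰ (qcolon R W (idealToFrac R I)) := by
  obtain ⟨c, hc, hcW⟩ := hW
  refine ⟨c * i₀, mul_mem hc hreg, fun q hq => ?_⟩
  rw [mul_smul, Algebra.smul_def i₀ q, mul_comm]
  exact hcW _ (mem_qcolon_idealToFrac.mp hq i₀ hi₀)

end Colon

namespace RIab

section Coordinates

variable {R : Type u} [CommRing R] {I : Ideal R} {a b : R}

@[simp] lemma smul_r (c : R) (s : RIab R I a b) : (c • s).r = c * s.r := by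
  simp [Algebra.smul_def]

@[simp] lemma smul_i (c : R) (s : RIab R I a b) : (c • s).i = c * s.i := by
  simp [Algebra.smul_def]

/-- Multiplication by `s` on the coordinates `(x, y)` of `x + y t`. -/
def coordSMul (s : RIab R I a b) (p : FractionRing R × FractionRing R) :
    FractionRing R × FractionRing R :=
  (algebraMap R _ s.r * p.1 - algebraMap R _ b * (algebraMap R _ s.i * p.2),
    algebraMap R _ s.r * p.2 + algebraMap R _ s.i * p.1 -
      algebraMap R _ a * (algebraMap R _ s.i * p.2))

lemma coordSMul_mul (s s' : RIab R I a b) (p : FractionRing R × FractionRing R) :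
    coordSMul (s * s') p = coordSMul s' (coordSMul s p) := by
  ext <;> simp only [coordSMul, mul_r, mul_i, map_sub, map_add, map_mul] <;> ring

variable {W : Submodule R (FractionRing R)}

lemma coordSMul_mem (s : RIab R I a b) {p : FractionRing R × FractionRing R}
    (hp : p.1 ∈ qcolon R W (idealToFrac R I) ∧ p.2 ∈ W) :
    (coordSMul s p).1 ∈ qcolon R W (idealToFrac R I) ∧ (coordSMul s p).2 ∈ W := by
  obtain ⟨hx, hy⟩ := hp
  have hsmul : ∀ (r : R) {w}, w ∈ W → algebraMap R _ r * w ∈ W := fun r w hw => by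
    rw [← Algebra.smul_def]; exact W.smul_mem r hw
  have hxi : algebraMap R _ s.i * p.1 ∈ W := by
    rw [mul_comm]; exact mem_qcolon_idealToFrac.mp hx _ s.hi
  have hiy : ∀ c : R, algebraMap R _ c * (algebraMap R _ s.i * p.2) ∈ W := fun c => by
    rw [← mul_assoc, ← map_mul]; exact hsmul _ hy
  refine ⟨(qcolon R W _).sub_mem ?_ (le_qcolon_idealToFrac (hiy b)),
    W.sub_mem (W.add_mem (hsmul _ hy) hxi) (hiy a)⟩
  rw [← Algebra.smul_def]
  exact (qcolon R W _).smul_mem _ hx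

def coordHom (p : FractionRing R × FractionRing R)
    (hp : p.1 ∈ qcolon R W (idealToFrac R I) ∧ p.2 ∈ W) : RIab R I a b →ₗ[R] W where
  toFun s := ⟨(coordSMul s p).2, (coordSMul_mem s hp).2⟩
  map_add' s s' := by
    ext
    simp only [coordSMul, add_r, add_i, map_add, Submodule.coe_add]
    ring
  map_smul' c s := by
    ext
    simp only [coordSMul, smul_r, smul_i, map_mul, Submodule.coe_smul, RingHom.id_apply]
    rw [Algebra.smul_def]
    ring

lemma coe_coordHom_apply (p : FractionRing R × FractionRing R)
    (hp : p.1 ∈ qcolon R W (idealToFrac R I) ∧ p.2 ∈ W) (s : RIab R I a b) :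
    (coordHom p hp s : FractionRing R) = (coordSMul s p).2 := rfl

variable {i₀ : R} (hi₀ : i₀ ∈ I) (hreg : i₀ ∈ R⁰)
include hi₀

lemma algebraMap_mul_linearMap_apply (φ : RIab R I a b →ₗ[R] W) (s : RIab R I a b) :
    algebraMap R _ i₀ * (φ s : FractionRing R) =
      algebraMap R _ (i₀ * s.r) * φ 1 + algebraMap R _ s.i * φ ⟨0, i₀, hi₀⟩ := by
  have hs : i₀ • s = (i₀ * s.r) • 1 + s.i • (⟨0, i₀, hi₀⟩ : RIab R I a b) := by
    ext <;> simp [mul_comm]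
  have := congrArg (fun s => (φ s : FractionRing R)) hs
  simp only [map_add, map_smul, Submodule.coe_add, Submodule.coe_smul] at this
  simpa only [Algebra.smul_def, mul_one] using this

include hreg

lemma coordHom_injective {p p' : FractionRing R × FractionRing R}
    (hp : p.1 ∈ qcolon R W (idealToFrac R I) ∧ p.2 ∈ W)
    (hp' : p'.1 ∈ qcolon R W (idealToFrac R I) ∧ p'.2 ∈ W)
    (h : (coordHom p hp : RIab R I a b →ₗ[R] W) = coordHom p' hp') : p = p' := by
  have h1 := congrArg Subtype.val (LinearMap.congr_fun h 1)
  have h2 := congrArg Subtype.val (LinearMap.congr_fun h ⟨0, i₀, hi₀⟩)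
  simp only [coe_coordHom_apply, coordSMul, one_r, one_i, map_one, map_zero, one_mul,
    zero_mul, add_zero, mul_zero, sub_zero, zero_add] at h1 h2
  have hx : algebraMap R _ i₀ * p.1 = algebraMap R _ i₀ * p'.1 := by
    rw [h1] at h2; linear_combination h2
  exact Prod.ext ((IsLocalization.map_units _ ⟨i₀, hreg⟩).mul_left_cancel hx) h1

lemma exists_coordHom_eq (φ : RIab R I a b →ₗ[R] W) :
    ∃ p, ∃ hp : p.1 ∈ qcolon R W (idealToFrac R I) ∧ p.2 ∈ W, coordHom p hp = φ := by
  obtain ⟨v, hv⟩ : ∃ v, v * algebraMap R (FractionRing R) i₀ = 1 :=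
    (IsLocalization.map_units (FractionRing R) ⟨i₀, hreg⟩).exists_left_inv
  have hφ := algebraMap_mul_linearMap_apply hi₀ φ
  set x : FractionRing R := v * φ ⟨0, i₀, hi₀⟩ + algebraMap R _ a * φ 1
  have hx : x ∈ qcolon R W (idealToFrac R I) := by
    refine mem_qcolon_idealToFrac.mpr fun j hj => ?_
    have hj' := hφ ⟨0, j, hj⟩
    simp only [mul_zero, map_zero, zero_mul, zero_add] at hj'
    have : x * algebraMap R _ j = φ ⟨0, j, hj⟩ + algebraMap R _ (a * j) * φ 1 := by
      simp only [x, map_mul]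
      linear_combination (-v) * hj' + (φ ⟨0, j, hj⟩ : FractionRing R) * hv
    rw [this, ← Algebra.smul_def]
    exact W.add_mem (φ _).2 (W.smul_mem _ (φ 1).2)
  refine ⟨(x, φ 1), ⟨hx, (φ 1).2⟩, LinearMap.ext fun s => Subtype.ext ?_⟩
  rw [coe_coordHom_apply]
  simp only [coordSMul, x, map_mul] at hφ ⊢
  linear_combination (-v) * hφ s + ((φ s : FractionRing R) - algebraMap R _ s.r * φ 1) * hv

end Coordinates

section FractionRing

variable {R : Type u} [CommRing R] [IsLocalRing R] {I : Ideal R} {a b : R}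

lemma mapFrac_algebraMap (r : R) :
    mapFrac I a b (algebraMap R _ r) = algebraMap (RIab R I a b) _ (algebraMap R _ r) :=
  IsLocalization.map_eq _ _

lemma isIntegral_mapFrac {u : FractionRing R} (hu : IsIntegral R u) :
    IsIntegral (RIab R I a b) (mapFrac I a b u) :=
  hu.map_of_comp_eq _ _ (RingHom.ext fun r => (mapFrac_algebraMap r).symm)

lemma isUnit_algebraMap_algebraMap {c : R} (hc : c ∈ R⁰) :
    IsUnit (algebraMap (RIab R I a b) (FractionRing (RIab R I a b)) (algebraMap R _ c)) :=
  IsLocalization.map_units _ ⟨_, algebraMap_mem_nonZeroDivisors hc⟩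

variable {i₀ : R} (hi₀ : i₀ ∈ I) (hreg : i₀ ∈ R⁰)

lemma tau_mul_algebraMap :
    tau I a b i₀ hi₀ hreg * algebraMap (RIab R I a b) _ (algebraMap R _ i₀) =
      algebraMap _ _ (⟨0, i₀, hi₀⟩ : RIab R I a b) :=
  IsLocalization.mk'_spec _ _ _

lemma mapFrac_mul_tau {j : R} (hj : j ∈ I) :
    mapFrac I a b (algebraMap R _ j) * tau I a b i₀ hi₀ hreg =
      algebraMap _ _ (⟨0, j, hj⟩ : RIab R I a b) := by
  refine (isUnit_algebraMap_algebraMap (I := I) (a := a) (b := b) hreg).mul_right_cancel ?_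
  rw [mul_assoc, tau_mul_algebraMap, mapFrac_algebraMap, ← map_mul, ← map_mul]
  congr 1
  ext <;> simp [mul_comm]

lemma tau_mul_tau : tau I a b i₀ hi₀ hreg * tau I a b i₀ hi₀ hreg =
    -(mapFrac I a b (algebraMap R _ a) * tau I a b i₀ hi₀ hreg) -
      mapFrac I a b (algebraMap R _ b) := by
  have hu := isUnit_algebraMap_algebraMap (I := I) (a := a) (b := b) hreg
  refine (hu.mul hu).mul_right_cancel ?_
  have hτ := tau_mul_algebraMap (a := a) (b := b) hi₀ hreg
  have hsq : (⟨0, i₀, hi₀⟩ : RIab R I a b) * ⟨0, i₀, hi₀⟩ +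
      algebraMap R _ a * ⟨0, i₀, hi₀⟩ * algebraMap R _ i₀ +
        algebraMap R _ b * algebraMap R _ i₀ * algebraMap R _ i₀ = 0 := by
    ext <;> simp <;> ring
  have := congrArg (algebraMap (RIab R I a b) (FractionRing (RIab R I a b))) hsq
  simp only [map_add, map_mul, map_zero, ← hτ] at this
  rw [mapFrac_algebraMap, mapFrac_algebraMap]
  linear_combination this

lemma isIntegral_tau : IsIntegral (RIab R I a b) (tau I a b i₀ hi₀ hreg) := by
  refine ⟨.X ^ 2 + .C (algebraMap R _ a) * .X + .C (algebraMap R _ b), by monicity!, ?_⟩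
  simp only [Polynomial.eval₂_add, Polynomial.eval₂_mul, Polynomial.eval₂_pow,
    Polynomial.eval₂_X, Polynomial.eval₂_C]
  rw [← mapFrac_algebraMap, ← mapFrac_algebraMap]
  linear_combination tau_mul_tau hi₀ hreg

noncomputable def fracMk (p : FractionRing R × FractionRing R) : FractionRing (RIab R I a b) :=
  mapFrac I a b p.1 + mapFrac I a b p.2 * tau I a b i₀ hi₀ hreg

lemma fracMk_add (p q : FractionRing R × FractionRing R) :
    fracMk (a := a) (b := b) hi₀ hreg (p + q) = fracMk hi₀ hreg p + fracMk hi₀ hreg q := by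
  simp only [fracMk, Prod.fst_add, Prod.snd_add, map_add]
  ring

lemma fracMk_sub (p q : FractionRing R × FractionRing R) :
    fracMk (a := a) (b := b) hi₀ hreg (p - q) = fracMk hi₀ hreg p - fracMk hi₀ hreg q := by
  simp only [fracMk, Prod.fst_sub, Prod.snd_sub, map_sub]
  ring

lemma fracMk_mul_mapFrac (x y c : FractionRing R) :
    fracMk hi₀ hreg (x, y) * mapFrac I a b c = fracMk hi₀ hreg (x * c, y * c) := by
  simp only [fracMk, map_mul]
  ring

lemma algebraMap_eq_fracMk (s : RIab R I a b) :
    algebraMap (RIab R I a b) (FractionRing (RIab R I a b)) s =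
      fracMk hi₀ hreg (algebraMap R _ s.r, algebraMap R _ s.i) := by
  rw [fracMk, mapFrac_mul_tau hi₀ hreg s.hi, mapFrac_algebraMap, ← map_add]
  congr 1
  ext <;> simp

lemma algebraMap_mul_fracMk (s : RIab R I a b) (p : FractionRing R × FractionRing R) :
    algebraMap (RIab R I a b) (FractionRing (RIab R I a b)) s * fracMk hi₀ hreg p =
      fracMk hi₀ hreg (coordSMul s p) := by
  rw [algebraMap_eq_fracMk hi₀ hreg]
  simp only [fracMk, coordSMul, map_add, map_sub, map_mul]
  linear_combination (mapFrac I a b (algebraMap R _ s.i) * mapFrac I a b p.2) *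
    tau_mul_tau hi₀ hreg

lemma fracMk_eq_zero {p : FractionRing R × FractionRing R}
    (h : fracMk (a := a) (b := b) hi₀ hreg p = 0) : p = 0 := by
  obtain ⟨x, y, d, hx, hy⟩ := IsLocalization.surj₂ R⁰ (FractionRing R) p.1 p.2
  have hmul : fracMk hi₀ hreg p * mapFrac I a b (algebraMap R _ (d * i₀)) =
      algebraMap _ _ (⟨x * i₀, y * i₀, I.mul_mem_left _ hi₀⟩ : RIab R I a b) := by
    rw [fracMk_mul_mapFrac, algebraMap_eq_fracMk hi₀ hreg, map_mul, ← mul_assoc, ← mul_assoc,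
      hx, hy, ← map_mul, ← map_mul]
  rw [h, zero_mul, ← map_zero (algebraMap (RIab R I a b) _)] at hmul
  have hint := IsFractionRing.injective _ (FractionRing (RIab R I a b)) hmul.symm
  have hxy : x = 0 ∧ y = 0 :=
    ⟨(mem_nonZeroDivisors_iff_right.mp hreg) _ (congrArg RIab.r hint),
      (mem_nonZeroDivisors_iff_right.mp hreg) _ (congrArg RIab.i hint)⟩
  have hd := IsLocalization.map_units (FractionRing R) d
  rw [hxy.1, map_zero, hd.mul_left_eq_zero] at hx
  rw [hxy.2, map_zero, hd.mul_left_eq_zero] at hy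
  exact Prod.ext hx hy

lemma fracMk_injective : Function.Injective (fracMk (a := a) (b := b) hi₀ hreg) := fun p q h =>
  sub_eq_zero.mp <| fracMk_eq_zero hi₀ hreg <| by rw [fracMk_sub, h, sub_self]

end FractionRing

section CanonicalIdeal

variable {R : Type u} [CommRing R] [IsLocalRing R] {I : Ideal R} {a b i₀ : R}
  (hi₀ : i₀ ∈ I) (hreg : i₀ ∈ R⁰) (W : Submodule R (FractionRing R)) (z : (FractionRing R)ˣ)

noncomputable def canonicalIdeal : Submodule (RIab R I a b) (FractionRing (RIab R I a b)) where
  carrier := {q | ∃ x ∈ qcolon R W (idealToFrac R I), ∃ y ∈ W,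
    q = fracMk hi₀ hreg (x * ↑z⁻¹, y * ↑z⁻¹)}
  zero_mem' := ⟨0, zero_mem _, 0, zero_mem _, by simp [fracMk]⟩
  add_mem' := by
    rintro _ _ ⟨x, hx, y, hy, rfl⟩ ⟨x', hx', y', hy', rfl⟩
    refine ⟨x + x', add_mem hx hx', y + y', add_mem hy hy', ?_⟩
    rw [← fracMk_add, Prod.mk_add_mk, add_mul, add_mul]
  smul_mem' := by
    rintro s _ ⟨x, hx, y, hy, rfl⟩
    obtain ⟨h1, h2⟩ := coordSMul_mem s (p := (x, y)) ⟨hx, hy⟩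
    refine ⟨_, h1, _, h2, ?_⟩
    rw [Algebra.smul_def, ← fracMk_mul_mapFrac, ← mul_assoc, algebraMap_mul_fracMk,
      fracMk_mul_mapFrac]

variable {hi₀ hreg W z}

lemma exists_coords (k : canonicalIdeal (a := a) (b := b) hi₀ hreg W z) :
    ∃ p : FractionRing R × FractionRing R, (p.1 ∈ qcolon R W (idealToFrac R I) ∧ p.2 ∈ W) ∧
      (k : FractionRing (RIab R I a b)) = fracMk hi₀ hreg p * mapFrac I a b ↑z⁻¹ := by
  obtain ⟨x, hx, y, hy, hk⟩ := k.2
  exact ⟨(x, y), ⟨hx, hy⟩, by rw [hk, fracMk_mul_mapFrac]⟩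

noncomputable def coords (k : canonicalIdeal (a := a) (b := b) hi₀ hreg W z) :
    FractionRing R × FractionRing R :=
  (exists_coords k).choose

lemma coords_mem (k : canonicalIdeal (a := a) (b := b) hi₀ hreg W z) :
    (coords k).1 ∈ qcolon R W (idealToFrac R I) ∧ (coords k).2 ∈ W :=
  (exists_coords k).choose_spec.1

lemma coe_eq_fracMk_coords (k : canonicalIdeal (a := a) (b := b) hi₀ hreg W z) :
    (k : FractionRing (RIab R I a b)) = fracMk hi₀ hreg (coords k) * mapFrac I a b ↑z⁻¹ :=
  (exists_coords k).choose_spec.2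

lemma coords_eq {k : canonicalIdeal (a := a) (b := b) hi₀ hreg W z}
    {p : FractionRing R × FractionRing R}
    (h : (k : FractionRing (RIab R I a b)) = fracMk hi₀ hreg p * mapFrac I a b ↑z⁻¹) :
    coords k = p :=
  fracMk_injective hi₀ hreg <| (z⁻¹.isUnit.map (mapFrac I a b)).mul_right_cancel <|
    (coe_eq_fracMk_coords k).symm.trans h

lemma coords_add (k k' : canonicalIdeal (a := a) (b := b) hi₀ hreg W z) :
    coords (k + k') = coords k + coords k' :=
  coords_eq <| by rw [Submodule.coe_add, coe_eq_fracMk_coords, coe_eq_fracMk_coords, fracMk_add,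
    add_mul]

lemma coords_smul (s : RIab R I a b) (k : canonicalIdeal (a := a) (b := b) hi₀ hreg W z) :
    coords (s • k) = coordSMul s (coords k) :=
  coords_eq <| by rw [Submodule.coe_smul, Algebra.smul_def, coe_eq_fracMk_coords, ← mul_assoc,
    algebraMap_mul_fracMk]

noncomputable def toHom (k : canonicalIdeal (a := a) (b := b) hi₀ hreg W z) :
    RIab R I a b →ₗ[R] W :=
  coordHom (coords k) (coords_mem k)

lemma toHom_add (k k' : canonicalIdeal (a := a) (b := b) hi₀ hreg W z) :
    toHom (k + k') = toHom k + toHom k' := by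
  ext s
  simp only [toHom, LinearMap.add_apply, Submodule.coe_add, coe_coordHom_apply, coords_add,
    coordSMul, Prod.fst_add, Prod.snd_add]
  ring

lemma toHom_smul_apply (s : RIab R I a b) (k : canonicalIdeal (a := a) (b := b) hi₀ hreg W z)
    (x : RIab R I a b) :
    toHom (s • k) x = toHom k (s * x) :=
  Subtype.ext <| by simp only [toHom, coe_coordHom_apply, coords_smul, coordSMul_mul]

lemma toHom_bijective :
    Function.Bijective (toHom : canonicalIdeal (a := a) (b := b) hi₀ hreg W z → _) := by
  refine ⟨fun k k' h => Subtype.ext ?_, fun φ => ?_⟩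
  · rw [coe_eq_fracMk_coords k, coe_eq_fracMk_coords k',
      coordHom_injective hi₀ hreg (coords_mem k) (coords_mem k') h]
  · obtain ⟨p, hp, rfl⟩ := exists_coordHom_eq hi₀ hreg φ
    let k : canonicalIdeal hi₀ hreg W z :=
      ⟨fracMk hi₀ hreg p * mapFrac I a b ↑z⁻¹, p.1, hp.1, p.2, hp.2,
        fracMk_mul_mapFrac hi₀ hreg p.1 p.2 _⟩
    have hk : coords k = p := coords_eq rfl
    exact ⟨k, LinearMap.ext fun s => Subtype.ext <| by
      rw [toHom, coe_coordHom_apply, coe_coordHom_apply, hk]⟩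

variable (hi₀ hreg)

lemma algebraMap_mem_canonicalIdeal (hz : (z : FractionRing R) ∈ qcolon R W (idealToFrac R I))
    (s : RIab R I a b) :
    algebraMap (RIab R I a b) (FractionRing (RIab R I a b)) s ∈ canonicalIdeal hi₀ hreg W z := by
  refine ⟨algebraMap R _ s.r * z, ?_, z * algebraMap R _ s.i,
    mem_qcolon_idealToFrac.mp hz _ s.hi, ?_⟩
  · rw [← Algebra.smul_def]
    exact Submodule.smul_mem _ _ hz
  · rw [algebraMap_eq_fracMk hi₀ hreg, Units.mul_inv_cancel_right, mul_right_comm, Units.mul_inv,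
      one_mul]

lemma isFractional_canonicalIdeal (hH : IsFractional R⁰ (qcolon R W (idealToFrac R I))) :
    IsFractional (RIab R I a b)⁰ (canonicalIdeal hi₀ hreg W z) := by
  obtain ⟨c, hc, hcH⟩ := hH
  obtain ⟨⟨r, d⟩, hd⟩ := IsLocalization.surj R⁰ (↑z⁻¹ : FractionRing R)
  refine ⟨algebraMap R _ (c * d * i₀),
    algebraMap_mem_nonZeroDivisors (mul_mem (mul_mem hc d.2) hreg), ?_⟩
  rintro _ ⟨x, hx, y, hy, rfl⟩
  obtain ⟨r₁, hr₁⟩ := hcH x hx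
  obtain ⟨r₂, hr₂⟩ := hcH y (le_qcolon_idealToFrac hy)
  refine ⟨⟨r₁ * r * i₀, r₂ * r * i₀, I.mul_mem_left _ hi₀⟩, ?_⟩
  rw [Algebra.smul_def] at hr₁ hr₂
  rw [algebraMap_eq_fracMk hi₀ hreg, Algebra.smul_def, ← mapFrac_algebraMap,
    mul_comm (mapFrac I a b _), fracMk_mul_mapFrac]
  congr 1
  ext
  · simp only [map_mul, hr₁, ← hd]; ring
  · simp only [map_mul, hr₂, ← hd]; ring

lemma isIntegral_of_mem_canonicalIdeal [IsNoetherianRing R]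
    (hH : IsFractional R⁰ (qcolon R W (idealToFrac R I)))
    (hz : IsPrincipalReduction R (z : FractionRing R) (qcolon R W (idealToFrac R I)))
    {q : FractionRing (RIab R I a b)} (hq : q ∈ canonicalIdeal hi₀ hreg W z) :
    IsIntegral (RIab R I a b) q := by
  obtain ⟨x, hx, y, hy, rfl⟩ := hq
  exact (isIntegral_mapFrac (hz.isIntegral_mul_inv hH.fg hx)).add
    ((isIntegral_mapFrac (hz.isIntegral_mul_inv hH.fg (le_qcolon_idealToFrac hy))).mul
      (isIntegral_tau hi₀ hreg))

end CanonicalIdeal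

end RIab

theorem stmt8_general (R : Type u) [CommRing R] [IsLocalRing R] [IsNoetherianRing R]
    (WR : Submodule R (FractionRing R))
    (hWfrac : IsFractional (nonZeroDivisors R) WR)
    (I : Ideal R)
    (z : (FractionRing R)ˣ)
    (hz : IsPrincipalReduction R (z : FractionRing R) (qcolon R WR (idealToFrac R I)))
    (a b : R) :
    ∀ (i₀ : R) (hi₀ : i₀ ∈ I) (hi₀reg : i₀ ∈ nonZeroDivisors R),
    ∃ K : Submodule (RIab R I a b) (FractionRing (RIab R I a b)),
      (K : Set (FractionRing (RIab R I a b))) =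
        {q | ∃ x ∈ qcolon R WR (idealToFrac R I), ∃ y ∈ WR,
          q = RIab.mapFrac I a b (x * ((z⁻¹ : (FractionRing R)ˣ) : FractionRing R)) +
              RIab.mapFrac I a b (y * ((z⁻¹ : (FractionRing R)ˣ) : FractionRing R)) *
                RIab.tau I a b i₀ hi₀ hi₀reg} ∧
      IsFractional (nonZeroDivisors (RIab R I a b)) K ∧
      (∀ s : RIab R I a b,
        algebraMap (RIab R I a b) (FractionRing (RIab R I a b)) s ∈ K) ∧
      (∀ q ∈ K, q ∈ integralClosure (RIab R I a b) (FractionRing (RIab R I a b))) ∧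
      ∃ e : ↥K → (RIab R I a b →ₗ[R] ↥WR),
        Function.Bijective e ∧
        (∀ k₁ k₂ : ↥K, e (k₁ + k₂) = e k₁ + e k₂) ∧
        (∀ (s : RIab R I a b) (k : ↥K) (x : RIab R I a b),
          (e (s • k)) x = (e k) (s * x)) := by
  intro i₀ hi₀ hreg
  have hH := hWfrac.qcolon_idealToFrac hi₀ hreg
  exact ⟨RIab.canonicalIdeal hi₀ hreg WR z, rfl,
    RIab.isFractional_canonicalIdeal hi₀ hreg hH,
    RIab.algebraMap_mem_canonicalIdeal hi₀ hreg hz.1,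
    fun _ hq => RIab.isIntegral_of_mem_canonicalIdeal hi₀ hreg hH hz hq,
    RIab.toHom, RIab.toHom_bijective, RIab.toHom_add, RIab.toHom_smul_apply⟩

/-- Proposition 2.1.  In the one-dimensional setting, with `z R` a minimal
reduction of `(ω_R : I)`, the set `K = { x/z + (y/z)t : x ∈ (ω_R : I), y ∈ ω_R }` is a
canonical ideal of `R(I)_{a,b}`: a fractional ideal, isomorphic as an `R(I)_{a,b}`-module
to `Hom_R(R(I)_{a,b}, ω_R)` (with module structure by precomposition with multiplication),
and `R(I)_{a,b} ⊆ K ⊆ \overline{R(I)_{a,b}}`. -/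
theorem stmt8 (R : Type u) [CommRing R] [IsLocalRing R] [IsNoetherianRing R]
    (hCM : IsCohenMacaulayLocalRing R) (hdim : ringKrullDim R = 1)
    [Infinite (ResidueField R)]
    (WR : Submodule R (FractionRing R))
    (hWfrac : IsFractional (nonZeroDivisors R) WR)
    (hWcan : IsCanonicalModule R ↥WR)
    (hW1 : (1 : FractionRing R) ∈ WR)
    (hWint : ∀ w ∈ WR, w ∈ integralClosure R (FractionRing R))
    (I : Ideal R) (hI0 : I ≠ ⊥) [Fact (I ≠ ⊤)]
    (hIm : I.radical = maximalIdeal R)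
    (z : (FractionRing R)ˣ)
    (hz : IsPrincipalReduction R (z : FractionRing R) (qcolon R WR (idealToFrac R I)))
    (a b : R) :
    ∀ (i₀ : R) (hi₀ : i₀ ∈ I) (hi₀reg : i₀ ∈ nonZeroDivisors R),
    ∃ K : Submodule (RIab R I a b) (FractionRing (RIab R I a b)),
      (K : Set (FractionRing (RIab R I a b))) =
        {q | ∃ x ∈ qcolon R WR (idealToFrac R I), ∃ y ∈ WR,
          q = RIab.mapFrac I a b (x * ((z⁻¹ : (FractionRing R)ˣ) : FractionRing R)) +
              RIab.mapFrac I a b (y * ((z⁻¹ : (FractionRing R)ˣ) : FractionRing R)) *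
                RIab.tau I a b i₀ hi₀ hi₀reg} ∧
      IsFractional (nonZeroDivisors (RIab R I a b)) K ∧
      (∀ s : RIab R I a b,
        algebraMap (RIab R I a b) (FractionRing (RIab R I a b)) s ∈ K) ∧
      (∀ q ∈ K, q ∈ integralClosure (RIab R I a b) (FractionRing (RIab R I a b))) ∧
      ∃ e : ↥K → (RIab R I a b →ₗ[R] ↥WR),
        Function.Bijective e ∧
        (∀ k₁ k₂ : ↥K, e (k₁ + k₂) = e k₁ + e k₂) ∧
        (∀ (s : RIab R I a b) (k : ↥K) (x : RIab R I a b),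
          (e (s • k)) x = (e k) (s * x)) :=
  stmt8_general R WR hWfrac I z hz a b
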